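/- arXiv:2404.19396 — 5 statements merged into one kernel-verified Lean document; each statement's English description precedes it below -/
import Mathlib

section
/- The function f(t) = sqrt(2(1/t^2 - 1)(sqrt(1-t^2) - 1) + 1) satisfies f(t) ≥ t - 0.07 for all t in (0,1). -/
/-!
Put `s = √(1 - t²)`, so that `t² + s² = 1`; the radicand then equals `(1 - s)(1 + 2s)/(1 + s)`.
For `t ≤ 0.07` the claim is trivial. Otherwise squaring and clearing `1 + s` (using `t² = 1 - s²`)
reduces it to the cubic inequality `s²(1 - s) + c²(1 + s) ≤ 2ct(1 + s)`, `c = 0.07`, on the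
quarter circle. Its slack has an interior minimum near `(t, s) ≈ (0.66, 0.75)`, so squares centred
there give the certificate.
-/

lemma radicand_eq_of_sq_add_sq {t s : ℝ} (ht : t ≠ 0) (hs : 0 ≤ s) (hts : t ^ 2 + s ^ 2 = 1) :
    2 * (1 / t ^ 2 - 1) * (s - 1) + 1 = (1 - s) * (1 + 2 * s) / (1 + s) := by
  have h1s : 1 + s ≠ 0 := by positivity
  field_simp
  nlinarith [hts]

lemma sq_mul_one_sub_add_le_of_sq_add_sq {t s : ℝ} (ht : 0.07 ≤ t) (hs : 0 ≤ s)
    (hts : t ^ 2 + s ^ 2 = 1) :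
    s ^ 2 * (1 - s) + 0.07 ^ 2 * (1 + s) ≤ 2 * 0.07 * t * (1 + s) := by
  have hs1 : s ≤ 1 := by nlinarith
  norm_num at ht ⊢
  nlinarith [sq_nonneg (t - 68/100), sq_nonneg (s - 73/100), sq_nonneg (t - s),
    mul_nonneg (by linarith : (0:ℝ) ≤ t) hs]

lemma sq_sub_le_radicand {t s : ℝ} (ht : 0.07 ≤ t) (hs : 0 ≤ s) (hts : t ^ 2 + s ^ 2 = 1) :
    (t - 0.07) ^ 2 ≤ (1 - s) * (1 + 2 * s) / (1 + s) := by
  rw [le_div_iff₀ (by positivity)]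
  nlinarith [sq_mul_one_sub_add_le_of_sq_add_sq ht hs hts]

theorem f_ge_t_sub_point07 (t : ℝ) (ht0 : 0 < t) (ht1 : t < 1) :
    Real.sqrt (2 * (1 / t ^ 2 - 1) * (Real.sqrt (1 - t ^ 2) - 1) + 1) ≥ t - 0.07 := by
  set s := Real.sqrt (1 - t ^ 2)
  have hs : 0 ≤ s := Real.sqrt_nonneg _
  have hts : t ^ 2 + s ^ 2 = 1 := by
    rw [Real.sq_sqrt (by nlinarith)]
    ring
  rw [radicand_eq_of_sq_add_sq ht0.ne' hs hts, ge_iff_le]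
  rcases le_or_gt t 0.07 with hsmall | hlarge
  · exact (sub_nonpos.2 hsmall).trans (Real.sqrt_nonneg _)
  · exact Real.le_sqrt_of_sq_le (sq_sub_le_radicand hlarge.le hs hts)
end

section
/- Let t ∈ (0,1). Consider points of S₁ ∩ S₂ written as p = x₁Jn₁ + x₂Jn₂ + x₃Jv₁ + x₄Jv₂ with x₁²+x₂²+x₃²+x₄² = 1/π and x₃²+x₄² = t²/π. If ⟨p, J(⟨p,Jv₁⟩Jv₁ + ⟨p,Jv₂⟩Jv₂)⟩ = 0, then x₁ = λx₄ and x₂ = −λx₃ with λ = ±√(1−t²)/t. -/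
/-!
Since `J² = -1`, the tangency form equals `-(⟨p, Jv₁⟩⟨p, v₁⟩ + ⟨p, Jv₂⟩⟨p, v₂⟩)`. In the frame,
`⟨p, Jv₁⟩ = x₃`, `⟨p, Jv₂⟩ = x₄`, `⟨p, v₁⟩ = -√(1-t²) x₁ - t x₄` and `⟨p, v₂⟩ = -√(1-t²) x₂ + t x₃`,
so the form is `√(1-t²) (x₁x₃ + x₂x₄)`. Its vanishing makes `(x₁, x₂)` orthogonal to `(x₃, x₄)` in
the plane, hence equal to `λ (x₄, -x₃)`, and comparing the two sphere equations gives
`λ² t² = 1 - t²`.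
-/

/-- Standard complex structure J on ℝ⁴: J(x₁,y₁,x₂,y₂) = (−y₁,x₁,−y₂,x₂). -/
def Jmap (p : Fin 4 → ℝ) : Fin 4 → ℝ := ![-p 1, p 0, -p 3, p 2]

/-- Euclidean dot product on ℝ⁴. -/
def dot4 (u v : Fin 4 → ℝ) : ℝ := ∑ i, u i * v i

lemma Jmap_vec (a b c d : ℝ) : Jmap ![a, b, c, d] = ![-b, a, -d, c] := rfl

lemma Jmap_add (p q : Fin 4 → ℝ) : Jmap (p + q) = Jmap p + Jmap q := by
  ext i; fin_cases i <;> simp [Jmap] <;> ring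

lemma Jmap_smul (a : ℝ) (p : Fin 4 → ℝ) : Jmap (a • p) = a • Jmap p := by
  ext i; fin_cases i <;> simp [Jmap]

lemma Jmap_Jmap (p : Fin 4 → ℝ) : Jmap (Jmap p) = -p := by
  ext i; fin_cases i <;> simp [Jmap]

lemma dot4_vec (a b c d e f g h : ℝ) :
    dot4 ![a, b, c, d] ![e, f, g, h] = a * e + b * f + c * g + d * h := by
  simp [dot4, Fin.sum_univ_four]

lemma dot4_add_right (p u v : Fin 4 → ℝ) : dot4 p (u + v) = dot4 p u + dot4 p v := by
  simp only [dot4, Pi.add_apply, mul_add, Finset.sum_add_distrib]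

lemma dot4_smul_smul (a b : ℝ) (u v : Fin 4 → ℝ) :
    dot4 (a • u) (b • v) = a * b * dot4 u v := by
  simp only [dot4, Pi.smul_apply, smul_eq_mul, Finset.mul_sum]
  exact Finset.sum_congr rfl fun _ _ => by ring

lemma dot4_smul_right (a : ℝ) (p u : Fin 4 → ℝ) : dot4 p (a • u) = a * dot4 p u := by
  simpa using dot4_smul_smul 1 a p u

lemma dot4_neg_right (p u : Fin 4 → ℝ) : dot4 p (-u) = -dot4 p u := by
  simpa using dot4_smul_right (-1) p u

lemma dot4_Jmap_smul_Jmap_add_smul_Jmap (a b : ℝ) (p u v : Fin 4 → ℝ) :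
    dot4 p (Jmap (a • Jmap u + b • Jmap v)) = -(a * dot4 p u + b * dot4 p v) := by
  rw [Jmap_add, Jmap_smul, Jmap_smul, Jmap_Jmap, Jmap_Jmap, dot4_add_right, dot4_smul_right,
    dot4_smul_right, dot4_neg_right, dot4_neg_right]
  ring

lemma one_div_sqrt_two_mul_self : 1 / √2 * (1 / √2) = 1 / 2 := by
  rw [div_mul_div_comm, one_mul, Real.mul_self_sqrt zero_le_two]

lemma sqrt_one_sub_mul_sqrt_one_add {t : ℝ} (ht : t ≤ 1) :
    √(1 - t) * √(1 + t) = √(1 - t ^ 2) := by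
  rw [← Real.sqrt_mul (by linarith)]
  ring_nf

section Frame

variable (t : ℝ)

noncomputable def frameV₁ : Fin 4 → ℝ := (1 / √2) • ![√(1 + t), 0, √(1 - t), 0]

noncomputable def frameV₂ : Fin 4 → ℝ := (1 / √2) • ![0, √(1 + t), 0, -√(1 - t)]

noncomputable def frameN₁ : Fin 4 → ℝ := (1 / √2) • ![0, √(1 - t), 0, √(1 + t)]

noncomputable def frameN₂ : Fin 4 → ℝ := (1 / √2) • ![-√(1 - t), 0, √(1 + t), 0]

noncomputable def framePoint (x₁ x₂ x₃ x₄ : ℝ) : Fin 4 → ℝ :=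
  x₁ • Jmap (frameN₁ t) + x₂ • Jmap (frameN₂ t) + x₃ • Jmap (frameV₁ t) + x₄ • Jmap (frameV₂ t)

variable {t} (x₁ x₂ x₃ x₄ : ℝ)

lemma framePoint_eq : framePoint t x₁ x₂ x₃ x₄ = (1 / √2) •
    ![-√(1 - t) * x₁ - √(1 + t) * x₄, -√(1 - t) * x₂ + √(1 + t) * x₃,
      -√(1 + t) * x₁ + √(1 - t) * x₄, √(1 + t) * x₂ + √(1 - t) * x₃] := by
  ext i; fin_cases i <;> simp [framePoint, frameN₁, frameN₂, frameV₁, frameV₂, Jmap] <;> ring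

lemma dot4_framePoint_Jmap_frameV₁ (ht₀ : -1 ≤ t) (ht₁ : t ≤ 1) :
    dot4 (framePoint t x₁ x₂ x₃ x₄) (Jmap (frameV₁ t)) = x₃ := by
  rw [framePoint_eq, frameV₁, Jmap_smul, dot4_smul_smul, one_div_sqrt_two_mul_self, Jmap_vec,
    dot4_vec]
  linear_combination (x₃ / 2) *
    (Real.sq_sqrt (by linarith : 0 ≤ 1 + t) + Real.sq_sqrt (by linarith : 0 ≤ 1 - t))

lemma dot4_framePoint_Jmap_frameV₂ (ht₀ : -1 ≤ t) (ht₁ : t ≤ 1) :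
    dot4 (framePoint t x₁ x₂ x₃ x₄) (Jmap (frameV₂ t)) = x₄ := by
  rw [framePoint_eq, frameV₂, Jmap_smul, dot4_smul_smul, one_div_sqrt_two_mul_self, Jmap_vec,
    dot4_vec]
  linear_combination (x₄ / 2) *
    (Real.sq_sqrt (by linarith : 0 ≤ 1 + t) + Real.sq_sqrt (by linarith : 0 ≤ 1 - t))

lemma dot4_framePoint_frameV₁ (ht₀ : -1 ≤ t) (ht₁ : t ≤ 1) :
    dot4 (framePoint t x₁ x₂ x₃ x₄) (frameV₁ t) = -√(1 - t ^ 2) * x₁ - t * x₄ := by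
  rw [framePoint_eq, frameV₁, dot4_smul_smul, one_div_sqrt_two_mul_self, dot4_vec,
    ← sqrt_one_sub_mul_sqrt_one_add ht₁]
  linear_combination (x₄ / 2) *
    (Real.sq_sqrt (by linarith : 0 ≤ 1 - t) - Real.sq_sqrt (by linarith : 0 ≤ 1 + t))

lemma dot4_framePoint_frameV₂ (ht₀ : -1 ≤ t) (ht₁ : t ≤ 1) :
    dot4 (framePoint t x₁ x₂ x₃ x₄) (frameV₂ t) = -√(1 - t ^ 2) * x₂ + t * x₃ := by
  rw [framePoint_eq, frameV₂, dot4_smul_smul, one_div_sqrt_two_mul_self, dot4_vec,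
    ← sqrt_one_sub_mul_sqrt_one_add ht₁]
  linear_combination (x₃ / 2) *
    (Real.sq_sqrt (by linarith : 0 ≤ 1 + t) - Real.sq_sqrt (by linarith : 0 ≤ 1 - t))

lemma tangency_form_framePoint (ht₀ : -1 ≤ t) (ht₁ : t ≤ 1) :
    let p := framePoint t x₁ x₂ x₃ x₄
    dot4 p (Jmap (dot4 p (Jmap (frameV₁ t)) • Jmap (frameV₁ t) +
      dot4 p (Jmap (frameV₂ t)) • Jmap (frameV₂ t))) = √(1 - t ^ 2) * (x₁ * x₃ + x₂ * x₄) := by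
  intro p
  rw [dot4_Jmap_smul_Jmap_add_smul_Jmap, dot4_framePoint_Jmap_frameV₁ _ _ _ _ ht₀ ht₁,
    dot4_framePoint_Jmap_frameV₂ _ _ _ _ ht₀ ht₁, dot4_framePoint_frameV₁ _ _ _ _ ht₀ ht₁,
    dot4_framePoint_frameV₂ _ _ _ _ ht₀ ht₁]
  ring

end Frame

lemma exists_eq_mul_of_mul_add_mul_eq_zero {a b c d : ℝ} (h : a * c + b * d = 0)
    (hcd : c ^ 2 + d ^ 2 ≠ 0) :
    ∃ lam : ℝ, a = lam * d ∧ b = -lam * c ∧ lam ^ 2 * (c ^ 2 + d ^ 2) = a ^ 2 + b ^ 2 := by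
  refine ⟨(a * d - b * c) / (c ^ 2 + d ^ 2), ?_, ?_, ?_⟩
  · field_simp; linear_combination c * h
  · field_simp; linear_combination d * h
  · field_simp; linear_combination (-(a * c + b * d)) * h

theorem tangency_condition (t : ℝ) (ht0 : 0 < t) (ht1 : t < 1)
    (x₁ x₂ x₃ x₄ : ℝ)
    (hS₁ : x₁ ^ 2 + x₂ ^ 2 + x₃ ^ 2 + x₄ ^ 2 = 1 / Real.pi)
    (hS₂ : x₃ ^ 2 + x₄ ^ 2 = t ^ 2 / Real.pi) :
    let v₁ : Fin 4 → ℝ :=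
      (1 / Real.sqrt 2) • ![Real.sqrt (1 + t), 0, Real.sqrt (1 - t), 0]
    let v₂ : Fin 4 → ℝ :=
      (1 / Real.sqrt 2) • ![0, Real.sqrt (1 + t), 0, -Real.sqrt (1 - t)]
    let n₁ : Fin 4 → ℝ :=
      (1 / Real.sqrt 2) • ![0, Real.sqrt (1 - t), 0, Real.sqrt (1 + t)]
    let n₂ : Fin 4 → ℝ :=
      (1 / Real.sqrt 2) • ![-Real.sqrt (1 - t), 0, Real.sqrt (1 + t), 0]
    let p : Fin 4 → ℝ :=
      x₁ • Jmap n₁ + x₂ • Jmap n₂ + x₃ • Jmap v₁ + x₄ • Jmap v₂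
    dot4 p (Jmap (dot4 p (Jmap v₁) • Jmap v₁ + dot4 p (Jmap v₂) • Jmap v₂)) = 0 →
      ∃ lam : ℝ, (lam = Real.sqrt (1 - t ^ 2) / t ∨ lam = -(Real.sqrt (1 - t ^ 2) / t)) ∧
        x₁ = lam * x₄ ∧ x₂ = -lam * x₃ := by
  intro v₁ v₂ n₁ n₂ p hcond
  have hform := tangency_form_framePoint x₁ x₂ x₃ x₄ (by linarith) ht1.le
  have horth : x₁ * x₃ + x₂ * x₄ = 0 :=
    (mul_eq_zero.1 (hform.symm.trans hcond)).resolve_left (Real.sqrt_pos.2 (by nlinarith)).ne'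
  have hπ := Real.pi_pos
  have h₃₄ : x₃ ^ 2 + x₄ ^ 2 ≠ 0 := by rw [hS₂]; positivity
  obtain ⟨lam, hx₁, hx₂, hlam⟩ := exists_eq_mul_of_mul_add_mul_eq_zero horth h₃₄
  have h₁₂ : x₁ ^ 2 + x₂ ^ 2 = (1 - t ^ 2) / Real.pi := by
    rw [sub_div, ← hS₂, ← hS₁]; ring
  rw [hS₂, h₁₂, ← mul_div_assoc, div_left_inj' hπ.ne'] at hlam
  refine ⟨lam, sq_eq_sq_iff_eq_or_eq_neg.1 ?_, hx₁, hx₂⟩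
  rw [div_pow, Real.sq_sqrt (by nlinarith), eq_div_iff (by positivity), hlam]
end

section
/- Let t ∈ (0,1) and let A be the symplectic matrix with A⁻¹ = [[1/√t, 0, 0, 0], [0, √t, 0, √((1−t²)/t)], [−√((1−t²)/t), 0, √t, 0], [0, 0, 0, 1/√t]] (acting on the last four coordinates, identity elsewhere). Then the inradius of the ellipsoid A·B^{2n}(1) equals √(t/(π(√(1−t²)+1))), i.e., min over unit vectors v of ‖Av‖/√π equals √(t/(π(√(1−t²)+1))). -/
/-!
Write `u = √(1 - t²)`, so that `u² + t² = 1`. The matrix splits into two copies, on the coordinate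
pairs `(0, 2)` and `(3, 1)` (the latter up to a sign), of the `2 × 2` map
`M = [[1/√t, 0], [-√((1 - t²)/t), √t]]`, for which
`t ‖M (a, b)‖² = a² + (t b - u a)²`. The identity
`(1 + u) ((1 + u) (a² + b²) - a² - (t b - u a)²) = u ((1 + u) b + t a)²`
shows `‖M (a, b)‖² ≤ (1 + u)/t ‖(a, b)‖²`, with equality at `(a, b) = (1 + u, -t)`.
-/

open Real

namespace ContinuousLinearMap

variable {E F : Type*} [NormedAddCommGroup E] [NormedSpace ℝ E]
  [NormedAddCommGroup F] [NormedSpace ℝ F]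

theorem opNorm_eq_sqrt_of_sq_le_of_sq_eq (f : E →L[ℝ] F) {c : ℝ}
    (hle : ∀ x, ‖f x‖ ^ 2 ≤ c * ‖x‖ ^ 2) {v : E} (hv : v ≠ 0)
    (heq : ‖f v‖ ^ 2 = c * ‖v‖ ^ 2) : ‖f‖ = √c := by
  have hv : 0 < ‖v‖ := norm_pos_iff.2 hv
  have hc : 0 ≤ c := nonneg_of_mul_nonneg_left (heq ▸ sq_nonneg _) (by positivity)
  have hsq (x : E) : (√c * ‖x‖) ^ 2 = c * ‖x‖ ^ 2 := by rw [mul_pow, sq_sqrt hc]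
  refine opNorm_eq_of_bounds (sqrt_nonneg c) (fun x ↦ ?_) fun N _ hN ↦ ?_
  · exact (sq_le_sq₀ (norm_nonneg _) (by positivity)).1 (hsq x ▸ hle x)
  · have hfv : ‖f v‖ = √c * ‖v‖ := by
      rw [← sq_eq_sq₀ (norm_nonneg _) (by positivity), hsq, heq]
    exact le_of_mul_le_mul_right (hfv ▸ hN v) hv

end ContinuousLinearMap

theorem EuclideanSpace.norm_sq_fin_four (x : EuclideanSpace ℝ (Fin 4)) :
    ‖x‖ ^ 2 = x 0 ^ 2 + x 1 ^ 2 + x 2 ^ 2 + x 3 ^ 2 := by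
  simp [EuclideanSpace.real_norm_sq_eq, Fin.sum_univ_four]

theorem sq_add_sub_sq_le_of_sq_add_sq_eq_one {t u : ℝ} (hu : 0 ≤ u) (h : u ^ 2 + t ^ 2 = 1)
    (a b : ℝ) : a ^ 2 + (t * b - u * a) ^ 2 ≤ (1 + u) * (a ^ 2 + b ^ 2) := by
  have key : (1 + u) * ((1 + u) * (a ^ 2 + b ^ 2) - (a ^ 2 + (t * b - u * a) ^ 2)) =
      u * ((1 + u) * b + t * a) ^ 2 := by
    linear_combination -(u * a ^ 2 + (1 + u) * b ^ 2) * h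
  nlinarith [mul_nonneg hu (sq_nonneg ((1 + u) * b + t * a))]

noncomputable def shearMatrix (r s : ℝ) : Matrix (Fin 4) (Fin 4) ℝ :=
  !![1 / r, 0, 0, 0;
     0, r, 0, s;
     -s, 0, r, 0;
     0, 0, 0, 1 / r]

theorem sq_mul_norm_toEuclideanLin_shearMatrix_sq {r : ℝ} (hr : r ≠ 0) (s : ℝ)
    (x : EuclideanSpace ℝ (Fin 4)) :
    r ^ 2 * ‖Matrix.toEuclideanLin (shearMatrix r s) x‖ ^ 2 =
      x 0 ^ 2 + (r ^ 2 * x 1 + r * s * x 3) ^ 2 + (r ^ 2 * x 2 - r * s * x 0) ^ 2 + x 3 ^ 2 := by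
  rw [EuclideanSpace.norm_sq_fin_four]
  simp only [shearMatrix, one_div, Matrix.toLpLin_apply, Matrix.cons_mulVec, dotProduct,
    Fin.sum_univ_four, Fin.isValue, Matrix.cons_val_zero, Matrix.cons_val_one, zero_mul, add_zero,
    Matrix.cons_val, zero_add, neg_mul, Matrix.empty_mulVec]
  field_simp
  ring

theorem opNorm_shearMatrix {r s : ℝ} (hr : 0 < r) (hs : 0 ≤ s)
    (h : (r * s) ^ 2 + (r ^ 2) ^ 2 = 1) :
    ‖(Matrix.toEuclideanLin (shearMatrix r s)).toContinuousLinearMap‖ =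
      √((1 + r * s) / r ^ 2) := by
  set u := r * s
  set t := r ^ 2
  have hu : 0 ≤ u := mul_nonneg hr.le hs
  have ht : 0 < t := by positivity
  refine ContinuousLinearMap.opNorm_eq_sqrt_of_sq_le_of_sq_eq _ (fun x ↦ ?_)
    (v := !₂[1 + u, 0, -t, 0]) (fun hv ↦ ?_) ?_
  · rw [LinearMap.coe_toContinuousLinearMap', div_mul_eq_mul_div, le_div_iff₀ ht, mul_comm,
      sq_mul_norm_toEuclideanLin_shearMatrix_sq hr.ne', EuclideanSpace.norm_sq_fin_four]
    nlinarith [sq_add_sub_sq_le_of_sq_add_sq_eq_one hu h (x 0) (x 2),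
      sq_add_sub_sq_le_of_sq_add_sq_eq_one hu h (x 3) (-x 1)]
  · have h0 : 1 + u = 0 := congrArg (· 0) hv
    linarith
  · rw [LinearMap.coe_toContinuousLinearMap', div_mul_eq_mul_div, eq_div_iff ht.ne', mul_comm,
      sq_mul_norm_toEuclideanLin_shearMatrix_sq hr.ne', EuclideanSpace.norm_sq_fin_four]
    simp only [Fin.isValue, Matrix.cons_val_zero, Matrix.cons_val_one, Matrix.cons_val, mul_zero,
      add_zero, ne_eq, OfNat.ofNat_ne_zero, not_false_eq_true, zero_pow, mul_neg, even_two,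
      Even.neg_pow]
    linear_combination (u + u ^ 2 + t ^ 2) * h

theorem opNorm_Ainv (t : ℝ) (ht0 : 0 < t) (ht1 : t < 1) :
    let Ainv : Matrix (Fin 4) (Fin 4) ℝ :=
      !![1 / Real.sqrt t, 0, 0, 0;
         0, Real.sqrt t, 0, Real.sqrt ((1 - t ^ 2) / t);
         -Real.sqrt ((1 - t ^ 2) / t), 0, Real.sqrt t, 0;
         0, 0, 0, 1 / Real.sqrt t]
    ‖(Matrix.toEuclideanLin Ainv).toContinuousLinearMap‖ =
      Real.sqrt ((Real.sqrt (1 - t ^ 2) + 1) / t) := by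
  intro Ainv
  have hrs : √t * √((1 - t ^ 2) / t) = √(1 - t ^ 2) := by
    rw [← sqrt_mul ht0.le, mul_div_cancel₀ _ ht0.ne']
  have hr : √t ^ 2 = t := sq_sqrt ht0.le
  have hnorm := opNorm_shearMatrix (sqrt_pos.2 ht0) (sqrt_nonneg ((1 - t ^ 2) / t))
    (by rw [hrs, hr, sq_sqrt (by nlinarith)]; ring)
  rwa [hrs, hr, add_comm] at hnorm
end

section
/- For every t ∈ (0,1): t/(√(1−t²)+1) ≤ f(t) and t² ≤ f(t), where f(t) = sqrt(2(1/t²−1)(√(1−t²)−1)+1). -/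
/-!
Put `s = √(1 - t²)`, so that `t² = (1 - s)(1 + s)` and `1/t² - 1 = s²/t²`. The radicand then
simplifies to `(1 - s)(1 + 2s)/(1 + s)`, while the squares of the two lower bounds are
`(1 - s)/(1 + s)` and `(1 - s)²(1 + s)²`. Both comparisons reduce to polynomial inequalities
in `s ∈ [0, 1]`: `1 ≤ 1 + 2s` and `(1 - s)(1 + s)³ = 1 + 2s - 2s³ - s⁴ ≤ 1 + 2s`.
-/

lemma radicand_eq_of_sq_add_sq_eq_one {t s : ℝ} (h : t ^ 2 + s ^ 2 = 1) (ht : t ≠ 0) :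
    2 * (1 / t ^ 2 - 1) * (s - 1) + 1 = (1 - s) * (1 + 2 * s) / (1 + s) := by
  have hs : 1 + s ≠ 0 := by
    rintro hs
    obtain rfl : s = -1 := by linarith
    exact ht (by nlinarith)
  field_simp
  linear_combination 2 * h

lemma div_add_one_sq_eq {t s : ℝ} (h : t ^ 2 + s ^ 2 = 1) (hs : 1 + s ≠ 0) :
    (t / (s + 1)) ^ 2 = (1 - s) / (1 + s) := by
  rw [div_pow, div_eq_div_iff (pow_ne_zero 2 (by rwa [add_comm])) hs]
  linear_combination (1 + s) * h

lemma one_sub_div_one_add_le {s : ℝ} (hs0 : 0 ≤ s) (hs1 : s ≤ 1) :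
    (1 - s) / (1 + s) ≤ (1 - s) * (1 + 2 * s) / (1 + s) := by
  gcongr ?_ / _
  exact le_mul_of_one_le_right (by linarith) (by linarith)

lemma one_sub_sq_sq_le {s : ℝ} (hs0 : 0 ≤ s) (hs1 : s ≤ 1) :
    (1 - s ^ 2) ^ 2 ≤ (1 - s) * (1 + 2 * s) / (1 + s) := by
  rw [le_div_iff₀ (by linarith)]
  have h : 0 ≤ (1 - s) * s ^ 3 * (2 + s) := by
    have : 0 ≤ 1 - s := by linarith
    positivity
  linear_combination h

theorem f_dominates_both_bounds (t : ℝ) (ht0 : 0 < t) (ht1 : t < 1) :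
    t / (Real.sqrt (1 - t ^ 2) + 1) ≤
      Real.sqrt (2 * (1 / t ^ 2 - 1) * (Real.sqrt (1 - t ^ 2) - 1) + 1) ∧
    t ^ 2 ≤ Real.sqrt (2 * (1 / t ^ 2 - 1) * (Real.sqrt (1 - t ^ 2) - 1) + 1) := by
  set s := Real.sqrt (1 - t ^ 2)
  have hs0 : 0 ≤ s := Real.sqrt_nonneg _
  have hts : t ^ 2 + s ^ 2 = 1 := by
    rw [Real.sq_sqrt (by nlinarith)]
    ring
  have hs1 : s ≤ 1 := by nlinarith
  rw [radicand_eq_of_sq_add_sq_eq_one hts ht0.ne']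
  constructor
  · apply Real.le_sqrt_of_sq_le
    rw [div_add_one_sq_eq hts (by positivity)]
    exact one_sub_div_one_add_le hs0 hs1
  · apply Real.le_sqrt_of_sq_le
    rw [show t ^ 2 = 1 - s ^ 2 by linarith]
    exact one_sub_sq_sq_le hs0 hs1
end

section
/- Let K₁ ⊂ ℝ^{2n}, K₂ ⊂ ℝ^{2m} be convex bodies containing the origin. Then their symplectic 2-product K₁ ×₂ K₂ := ⋃_{0≤s≤1} ((1−s)^{1/2}K₁ × s^{1/2}K₂) is a convex subset of ℝ^{2n+2m}. -/
/-!
Writing `p = √(1 - s)` and `q = √s`, the symplectic 2-product is the union of the boxes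
`p • K₁ ×ˢ q • K₂` over the quarter circle `p² + q² = 1`, `p, q ≥ 0`. Since `K₁` is star-shaped
about `0`, these boxes grow with `p`, so the union may as well be taken over the whole quarter
disk. That index set is convex, and for convex `K` one has
`a • p • K + b • p' • K = (a * p + b * p') • K`, so a union of boxes indexed by a convex set of
nonnegative scalars is convex.
-/

open Pointwise

section

variable {𝕜 E F : Type*} [Field 𝕜] [LinearOrder 𝕜] [IsStrictOrderedRing 𝕜]
  [AddCommGroup E] [Module 𝕜 E] [AddCommGroup F] [Module 𝕜 F]

theorem StarConvex.smul_set_subset_smul_set {K : Set E} (hK : StarConvex 𝕜 0 K) {r r' : 𝕜}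
    (hr : 0 ≤ r) (hrr' : r ≤ r') : r • K ⊆ r' • K := by
  rintro _ ⟨x, hx, rfl⟩
  rcases hr.eq_or_lt with rfl | hr
  · exact ⟨0, hK.mem ⟨x, hx⟩, by simp⟩
  · have hr' : 0 < r' := hr.trans_le hrr'
    refine ⟨(r / r') • x, hK.smul_mem hx (by positivity) (div_le_one_of_le₀ hrr' hr'.le), ?_⟩
    simp only [smul_smul, mul_div_cancel₀ _ hr'.ne']

theorem Convex.biUnion_smul_prod_smul {K₁ : Set E} {K₂ : Set F} (hK₁ : Convex 𝕜 K₁)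
    (hK₂ : Convex 𝕜 K₂) {D : Set (𝕜 × 𝕜)} (hD : Convex 𝕜 D)
    (hD_nonneg : ∀ z ∈ D, 0 ≤ z.1 ∧ 0 ≤ z.2) :
    Convex 𝕜 (⋃ z ∈ D, (z.1 • K₁) ×ˢ (z.2 • K₂)) := by
  rintro ⟨x, y⟩ hxy ⟨x', y'⟩ hxy' a b ha hb hab
  simp only [Set.mem_iUnion, Set.mem_prod] at hxy hxy' ⊢
  obtain ⟨z, hz, hx, hy⟩ := hxy
  obtain ⟨z', hz', hx', hy'⟩ := hxy'
  obtain ⟨hp, hq⟩ := hD_nonneg z hz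
  obtain ⟨hp', hq'⟩ := hD_nonneg z' hz'
  refine ⟨a • z + b • z', hD hz hz' ha hb hab, ?_, ?_⟩
  · simp only [Prod.fst_add, Prod.smul_fst, smul_eq_mul,
      hK₁.add_smul (mul_nonneg ha hp) (mul_nonneg hb hp'), ← smul_smul]
    exact Set.add_mem_add (Set.smul_mem_smul_set hx) (Set.smul_mem_smul_set hx')
  · simp only [Prod.snd_add, Prod.smul_snd, smul_eq_mul,
      hK₂.add_smul (mul_nonneg ha hq) (mul_nonneg hb hq'), ← smul_smul]
    exact Set.add_mem_add (Set.smul_mem_smul_set hy) (Set.smul_mem_smul_set hy')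

end

def quarterDisk : Set (ℝ × ℝ) := {z | 0 ≤ z.1 ∧ 0 ≤ z.2 ∧ z.1 ^ 2 + z.2 ^ 2 ≤ 1}

theorem convex_quarterDisk : Convex ℝ quarterDisk := by
  rintro ⟨p, q⟩ ⟨hp, hq, hpq⟩ ⟨p', q'⟩ ⟨hp', hq', hpq'⟩ a b ha hb hab
  dsimp only at hp hq hpq hp' hq' hpq'
  simp only [quarterDisk, Set.mem_ofPred_eq, Prod.fst_add, Prod.snd_add, Prod.smul_fst,
    Prod.smul_snd, smul_eq_mul]
  refine ⟨by positivity, by positivity, ?_⟩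
  have hcs : p * p' + q * q' ≤ 1 := by nlinarith [sq_nonneg (p - p'), sq_nonneg (q - q')]
  nlinarith [mul_le_mul_of_nonneg_left hpq (sq_nonneg a),
    mul_le_mul_of_nonneg_left hpq' (sq_nonneg b), mul_le_mul_of_nonneg_left hcs (mul_nonneg ha hb)]

theorem biUnion_sqrt_smul_prod_eq_biUnion_quarterDisk {E F : Type*} [AddCommGroup E] [Module ℝ E]
    [AddCommGroup F] [Module ℝ F] {K₁ : Set E} {K₂ : Set F} (hK₁ : StarConvex ℝ 0 K₁) :
    ⋃ s ∈ Set.Icc (0 : ℝ) 1, (√(1 - s) • K₁) ×ˢ (√s • K₂) =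
      ⋃ z ∈ quarterDisk, (z.1 • K₁) ×ˢ (z.2 • K₂) := by
  apply subset_antisymm
  · refine Set.iUnion₂_subset fun s (hs : s ∈ Set.Icc 0 1) => ?_
    have hz : (√(1 - s), √s) ∈ quarterDisk := by
      refine ⟨Real.sqrt_nonneg _, Real.sqrt_nonneg _, ?_⟩
      rw [Real.sq_sqrt (by linarith [hs.2]), Real.sq_sqrt hs.1]
      linarith
    exact Set.subset_biUnion_of_mem (u := fun z : ℝ × ℝ => (z.1 • K₁) ×ˢ (z.2 • K₂)) hz
  · refine Set.iUnion₂_subset fun z (hz : z ∈ quarterDisk) => ?_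
    obtain ⟨hp, hq, hpq⟩ := hz
    have hs : z.2 ^ 2 ∈ Set.Icc (0 : ℝ) 1 := ⟨by positivity, by nlinarith⟩
    calc (z.1 • K₁) ×ˢ (z.2 • K₂) ⊆ (√(1 - z.2 ^ 2) • K₁) ×ˢ (√(z.2 ^ 2) • K₂) := by
          rw [Real.sqrt_sq hq]
          exact Set.prod_mono
            (hK₁.smul_set_subset_smul_set hp (Real.le_sqrt_of_sq_le (by linarith))) le_rfl
      _ ⊆ _ := Set.subset_biUnion_of_mem (u := fun s => (√(1 - s) • K₁) ×ˢ (√s • K₂)) hs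

theorem symplectic_two_product_convex_general (n m : ℕ)
    (K₁ : Set (Fin (2 * n) → ℝ)) (K₂ : Set (Fin (2 * m) → ℝ))
    (hK₁conv : Convex ℝ K₁) (hK₂conv : Convex ℝ K₂)
    (hK₁int : (0 : Fin (2 * n) → ℝ) ∈ interior K₁) :
    Convex ℝ (⋃ s ∈ Set.Icc (0 : ℝ) 1,
      (Real.sqrt (1 - s) • K₁) ×ˢ (Real.sqrt s • K₂)) := by
  rw [biUnion_sqrt_smul_prod_eq_biUnion_quarterDisk (hK₁conv.starConvex (interior_subset hK₁int))]
  exact hK₁conv.biUnion_smul_prod_smul hK₂conv convex_quarterDisk fun _ hz => ⟨hz.1, hz.2.1⟩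

theorem symplectic_two_product_convex (n m : ℕ)
    (K₁ : Set (Fin (2 * n) → ℝ)) (K₂ : Set (Fin (2 * m) → ℝ))
    (hK₁conv : Convex ℝ K₁) (hK₂conv : Convex ℝ K₂)
    (hK₁cpt : IsCompact K₁) (hK₂cpt : IsCompact K₂)
    (hK₁int : (0 : Fin (2 * n) → ℝ) ∈ interior K₁)
    (hK₂int : (0 : Fin (2 * m) → ℝ) ∈ interior K₂) :
    Convex ℝ (⋃ s ∈ Set.Icc (0 : ℝ) 1,
      (Real.sqrt (1 - s) • K₁) ×ˢ (Real.sqrt s • K₂)) :=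
  symplectic_two_product_convex_general n m K₁ K₂ hK₁conv hK₂conv hK₁int
end
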